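/- arXiv:1807.11825 — 5 statements merged into one kernel-verified Lean document; each statement's English description precedes it below -/
import Mathlib

section
/- Consider the semi-discrete finite volume scheme Ω_{i,j} d q_{i,j}/dt = −[F̂_{i+1/2,j} A_{i+1/2,j} − F̂_{i−1/2,j} A_{i−1/2,j} + Ĝ_{i,j+1/2} A_{i,j+1/2} − Ĝ_{i,j−1/2} A_{i,j−1/2}] + S_{i,j} on a two-dimensional structured curvilinear mesh, where the interface values fed into the numerical fluxes are obtained by applying any reconstruction procedure that is exact on constant data to the hydrostatic variables w = (ρ/α, u, v, p/β) and transforming back with the face-point values of α and β, and where the numerical fluxes F̂, Ĝ are any functions consistent with the Euler normal flux. If the initial cell data satisfy u_{i,j} = v_{i,j} = 0, ρ_{i,j}/α_{i,j} = ρ₀ (a constant) and p_{i,j}/β_{i,j} = p₀ (a constant) for all cells (i,j), then for every cell the flux terms exactly cancel the discretized source term S_{i,j}, so that d q_{i,j}/dt = 0 for all (i,j); i.e., the scheme is well-balanced and preserves this discrete hydrostatic state exactly. -/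
/-!
A hydrostatic state has zero velocity, so every consistent numerical flux reduces to the
pressure term `p n`. Since the reconstruction acts on `w = (ρ/α, u, v, p/β)`, which is
constant, the face pressures are exactly `p₀ β` at the face midpoints. Multiplied by the
face length, `p₀ β n A` is `p₀ β` times the rotated edge vector, and the four face
contributions sum to precisely the discretized source term, whose prefactor
`p₀ ρ/(ρ₀ α)` equals `p₀`.
-/

/-- A primitive gas state `(ρ, u, v, p)`. -/
abbrev GasState : Type := ℝ × ℝ × ℝ × ℝ

/-- The Euler normal flux `F(q, n) = (ρ u_n, p n₁ + ρ u u_n, p n₂ + ρ v u_n, (E+p) u_n)`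
with `u_n = u n₁ + v n₂`, for a given total-energy function `E = E(ρ,u,v,p)`. -/
def eulerFlux (E : GasState → ℝ) (q : GasState) (n : ℝ × ℝ) : ℝ × ℝ × ℝ × ℝ :=
  (q.1 * (q.2.1 * n.1 + q.2.2.1 * n.2),
   q.2.2.2 * n.1 + q.1 * q.2.1 * (q.2.1 * n.1 + q.2.2.1 * n.2),
   q.2.2.2 * n.2 + q.1 * q.2.2.1 * (q.2.1 * n.1 + q.2.2.1 * n.2),
   (E q + q.2.2.2) * (q.2.1 * n.1 + q.2.2.1 * n.2))

theorem eulerFlux_at_rest (E : GasState → ℝ) (ρ p : ℝ) (n : ℝ × ℝ) :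
    eulerFlux E (ρ, 0, 0, p) n = (0, p * n.1, p * n.2, 0) := by
  simp [eulerFlux]

theorem div_sq_add_div_sq_eq_one {K : Type*} [Field K] {A a b : K} (hA : A ≠ 0) (hA2 : A ^ 2 = a ^ 2 + b ^ 2) :
    (a / A) ^ 2 + (b / A) ^ 2 = 1 := by
  rw [div_pow, div_pow, ← add_div, ← hA2, div_self (pow_ne_zero 2 hA)]

theorem smul_consistent_flux_at_rest {E : GasState → ℝ}
    {Fhat : GasState → GasState → (ℝ × ℝ) → ℝ × ℝ × ℝ × ℝ}
    (hcons : ∀ (q : GasState) (n : ℝ × ℝ), n.1 ^ 2 + n.2 ^ 2 = 1 → Fhat q q n = eulerFlux E q n)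
    {A a b : ℝ} (hA : A ≠ 0) (hA2 : A ^ 2 = a ^ 2 + b ^ 2) (ρ p : ℝ) :
    A • Fhat (ρ, 0, 0, p) (ρ, 0, 0, p) (a / A, b / A) = (0, p * a, p * b, 0) := by
  rw [hcons _ _ (div_sq_add_div_sq_eq_one hA hA2), eulerFlux_at_rest]
  simp only [Prod.smul_mk, smul_eq_mul, mul_zero]
  congr 2 <;> field_simp

theorem mul_div_mul_eq_of_div_eq {K : Type*} [Field K] {p r a r₀ : K} (hr : r / a = r₀) (hr₀ : r₀ ≠ 0) :
    p * r / (r₀ * a) = p := by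
  rw [mul_div_assoc, mul_comm r₀, ← div_div, hr, div_self hr₀, mul_one]

theorem alpha_beta_scheme_well_balanced_general
    -- mesh corners
    (X Y : ℤ → ℤ → ℝ)
    -- face lengths (nonzero) and unit normals
    (Ax Ay : ℤ → ℤ → ℝ) (ℓ m : ℤ → ℤ → ℝ × ℝ)
    (hAx : ∀ i j, Ax i j = Real.sqrt ((X i (j-1) - X i j)^2 + (Y i (j-1) - Y i j)^2))
    (hAy : ∀ i j, Ay i j = Real.sqrt ((X i j - X (i-1) j)^2 + (Y i j - Y (i-1) j)^2))
    (hAx0 : ∀ i j, Ax i j ≠ 0) (hAy0 : ∀ i j, Ay i j ≠ 0)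
    (hℓ : ∀ i j, ℓ i j = ((Y i j - Y i (j-1)) / Ax i j, -(X i j - X i (j-1)) / Ax i j))
    (hm : ∀ i j, m i j = (-(Y i j - Y (i-1) j) / Ay i j, (X i j - X (i-1) j) / Ay i j))
    -- cell areas
    (Ωc : ℤ → ℤ → ℝ) (hΩc : ∀ i j, 0 < Ωc i j)
    -- positive functions α, β; cell centers and face midpoints
    (α β : ℝ × ℝ → ℝ)
    (P Mx My : ℤ → ℤ → ℝ × ℝ)
    -- total-energy function and consistent numerical fluxes
    (E : GasState → ℝ)
    (Fhat Ghat : GasState → GasState → (ℝ × ℝ) → ℝ × ℝ × ℝ × ℝ)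
    (hFcons : ∀ (q : GasState) (n : ℝ × ℝ), n.1^2 + n.2^2 = 1 → Fhat q q n = eulerFlux E q n)
    (hGcons : ∀ (q : GasState) (n : ℝ × ℝ), n.1^2 + n.2^2 = 1 → Ghat q q n = eulerFlux E q n)
    -- any reconstruction procedure that is exact on constant data
    (RxL RxR RyL RyR : (ℤ → ℤ → GasState) → ℤ → ℤ → GasState)
    (hRxL : ∀ c : GasState, RxL (fun _ _ => c) = fun _ _ => c)
    (hRxR : ∀ c : GasState, RxR (fun _ _ => c) = fun _ _ => c)
    (hRyL : ∀ c : GasState, RyL (fun _ _ => c) = fun _ _ => c)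
    (hRyR : ∀ c : GasState, RyR (fun _ _ => c) = fun _ _ => c)
    -- cell data and hydrostatic variables w = (ρ/α, u, v, p/β)
    (ρc uc vc pc : ℤ → ℤ → ℝ)
    (w : ℤ → ℤ → GasState)
    (hw : ∀ i j, w i j = (ρc i j / α (P i j), uc i j, vc i j, pc i j / β (P i j)))
    -- reconstructed primitive states at the faces, transformed back with α, β
    (qxL qxR qyL qyR : ℤ → ℤ → GasState)
    (hqxL : ∀ i j, qxL i j = ((RxL w i j).1 * α (Mx i j), (RxL w i j).2.1,
      (RxL w i j).2.2.1, (RxL w i j).2.2.2 * β (Mx i j)))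
    (hqxR : ∀ i j, qxR i j = ((RxR w i j).1 * α (Mx i j), (RxR w i j).2.1,
      (RxR w i j).2.2.1, (RxR w i j).2.2.2 * β (Mx i j)))
    (hqyL : ∀ i j, qyL i j = ((RyL w i j).1 * α (My i j), (RyL w i j).2.1,
      (RyL w i j).2.2.1, (RyL w i j).2.2.2 * β (My i j)))
    (hqyR : ∀ i j, qyR i j = ((RyR w i j).1 * α (My i j), (RyR w i j).2.1,
      (RyR w i j).2.2.1, (RyR w i j).2.2.2 * β (My i j)))
    -- hydrostatic initial data
    (ρ₀ p₀ : ℝ) (hρ₀ : 0 < ρ₀)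
    (hu : ∀ i j, uc i j = 0) (hv : ∀ i j, vc i j = 0)
    (hρ : ∀ i j, ρc i j / α (P i j) = ρ₀)
    (hp : ∀ i j, pc i j / β (P i j) = p₀)
    -- discretized gravitational source term
    (S : ℤ → ℤ → ℝ × ℝ × ℝ × ℝ)
    (hS : ∀ i j, S i j =
      (0,
       p₀ * ρc i j / (ρ₀ * α (P i j)) *
         ((Y i j - Y i (j-1)) * β (Mx i j) - (Y (i-1) j - Y (i-1) (j-1)) * β (Mx (i-1) j)
          - ((Y i j - Y (i-1) j) * β (My i j) - (Y i (j-1) - Y (i-1) (j-1)) * β (My i (j-1)))),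
       p₀ * ρc i j / (ρ₀ * α (P i j)) *
         (-((X i j - X i (j-1)) * β (Mx i j) - (X (i-1) j - X (i-1) (j-1)) * β (Mx (i-1) j))
          + ((X i j - X (i-1) j) * β (My i j) - (X i (j-1) - X (i-1) (j-1)) * β (My i (j-1)))),
       0))
    -- the semi-discrete finite volume scheme
    (qdot : ℤ → ℤ → ℝ × ℝ × ℝ × ℝ)
    (hscheme : ∀ i j, (Ωc i j) • qdot i j =
      S i j -
        ((Ax i j) • Fhat (qxL i j) (qxR i j) (ℓ i j)
          - (Ax (i-1) j) • Fhat (qxL (i-1) j) (qxR (i-1) j) (ℓ (i-1) j)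
          + (Ay i j) • Ghat (qyL i j) (qyR i j) (m i j)
          - (Ay i (j-1)) • Ghat (qyL i (j-1)) (qyR i (j-1)) (m i (j-1)))) :
    ∀ i j : ℤ,
      -- the flux terms exactly cancel the discretized source term
      ((Ax i j) • Fhat (qxL i j) (qxR i j) (ℓ i j)
        - (Ax (i-1) j) • Fhat (qxL (i-1) j) (qxR (i-1) j) (ℓ (i-1) j)
        + (Ay i j) • Ghat (qyL i j) (qyR i j) (m i j)
        - (Ay i (j-1)) • Ghat (qyL i (j-1)) (qyR i (j-1)) (m i (j-1))) = S i j ∧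
      -- hence the discrete hydrostatic state is preserved exactly
      qdot i j = 0 := by
  have hw_const : w = fun _ _ => ((ρ₀, 0, 0, p₀) : GasState) := by
    funext i j
    rw [hw, hu, hv, hρ, hp]
  have hFx : ∀ i j, Ax i j • Fhat (qxL i j) (qxR i j) (ℓ i j) =
      (0, p₀ * β (Mx i j) * (Y i j - Y i (j-1)), p₀ * β (Mx i j) * -(X i j - X i (j-1)), 0) := by
    intro i j
    rw [hqxL, hqxR, hw_const, hRxL, hRxR, hℓ]
    exact smul_consistent_flux_at_rest hFcons (hAx0 i j)
      (by rw [hAx, Real.sq_sqrt (by positivity)]; ring) _ _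
  have hGy : ∀ i j, Ay i j • Ghat (qyL i j) (qyR i j) (m i j) =
      (0, p₀ * β (My i j) * -(Y i j - Y (i-1) j), p₀ * β (My i j) * (X i j - X (i-1) j), 0) := by
    intro i j
    rw [hqyL, hqyR, hw_const, hRyL, hRyR, hm]
    exact smul_consistent_flux_at_rest hGcons (hAy0 i j)
      (by rw [hAy, Real.sq_sqrt (by positivity)]; ring) _ _
  intro i j
  have hcancel : Ax i j • Fhat (qxL i j) (qxR i j) (ℓ i j)
        - Ax (i-1) j • Fhat (qxL (i-1) j) (qxR (i-1) j) (ℓ (i-1) j)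
        + Ay i j • Ghat (qyL i j) (qyR i j) (m i j)
        - Ay i (j-1) • Ghat (qyL i (j-1)) (qyR i (j-1)) (m i (j-1)) = S i j := by
    rw [hFx, hFx, hGy, hGy, hS, mul_div_mul_eq_of_div_eq (hρ i j) hρ₀.ne']
    simp only [Prod.mk_sub_mk, Prod.mk_add_mk, Prod.mk.injEq]
    refine ⟨by ring, by ring, by ring, by ring⟩
  refine ⟨hcancel, (smul_eq_zero.mp ?_).resolve_left (hΩc i j).ne'⟩
  rw [hscheme, hcancel, sub_self]

/-- **Well-balanced property of the α-β finite volume scheme on curvilinear meshes.**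

The mesh corners are `(X i j, Y i j) = (x_{i+1/2,j+1/2}, y_{i+1/2,j+1/2})`; `Ax i j`,
`Ay i j` are the lengths of the faces `(i+1/2, j)` and `(i, j+1/2)` (assumed nonzero)
with unit normals `ℓ i j` and `m i j`; `α, β` are positive functions on ℝ², evaluated
at the cell centers `P i j` and at the face midpoints `Mx i j`, `My i j`; `Fhat`,
`Ghat` are any numerical fluxes consistent with the Euler normal flux for the
total-energy function `E`; `RxL, RxR, RyL, RyR` form any reconstruction procedure that
is exact on constant data, applied to the hydrostatic variables
`w = (ρ/α, u, v, p/β)` and transformed back with the face-midpoint values of `α, β`;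
`S i j` is the discretized gravitational source term, and `qdot i j` is the
semi-discrete time derivative defined by the scheme
`Ω_{ij} (d/dt) q_{ij} = -(flux differences) + S_{ij}`.

If the initial cell data satisfy `u = v = 0`, `ρ/α = ρ₀` and `p/β = p₀` with constants
`ρ₀, p₀ > 0`, then in every cell the flux terms exactly cancel the source term and
`(d/dt) q_{ij} = 0`: the scheme preserves the discrete hydrostatic state exactly. -/
theorem alpha_beta_scheme_well_balanced
    -- mesh corners
    (X Y : ℤ → ℤ → ℝ)
    -- face lengths (nonzero) and unit normals
    (Ax Ay : ℤ → ℤ → ℝ) (ℓ m : ℤ → ℤ → ℝ × ℝ)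
    (hAx : ∀ i j, Ax i j = Real.sqrt ((X i (j-1) - X i j)^2 + (Y i (j-1) - Y i j)^2))
    (hAy : ∀ i j, Ay i j = Real.sqrt ((X i j - X (i-1) j)^2 + (Y i j - Y (i-1) j)^2))
    (hAx0 : ∀ i j, Ax i j ≠ 0) (hAy0 : ∀ i j, Ay i j ≠ 0)
    (hℓ : ∀ i j, ℓ i j = ((Y i j - Y i (j-1)) / Ax i j, -(X i j - X i (j-1)) / Ax i j))
    (hm : ∀ i j, m i j = (-(Y i j - Y (i-1) j) / Ay i j, (X i j - X (i-1) j) / Ay i j))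
    -- cell areas
    (Ωc : ℤ → ℤ → ℝ) (hΩc : ∀ i j, 0 < Ωc i j)
    -- positive functions α, β; cell centers and face midpoints
    (α β : ℝ × ℝ → ℝ) (hα : ∀ z, 0 < α z) (hβ : ∀ z, 0 < β z)
    (P Mx My : ℤ → ℤ → ℝ × ℝ)
    (hMx : ∀ i j, Mx i j = ((X i (j-1) + X i j) / 2, (Y i (j-1) + Y i j) / 2))
    (hMy : ∀ i j, My i j = ((X (i-1) j + X i j) / 2, (Y (i-1) j + Y i j) / 2))
    -- total-energy function and consistent numerical fluxes
    (E : GasState → ℝ)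
    (Fhat Ghat : GasState → GasState → (ℝ × ℝ) → ℝ × ℝ × ℝ × ℝ)
    (hFcons : ∀ (q : GasState) (n : ℝ × ℝ), n.1^2 + n.2^2 = 1 → Fhat q q n = eulerFlux E q n)
    (hGcons : ∀ (q : GasState) (n : ℝ × ℝ), n.1^2 + n.2^2 = 1 → Ghat q q n = eulerFlux E q n)
    -- any reconstruction procedure that is exact on constant data
    (RxL RxR RyL RyR : (ℤ → ℤ → GasState) → ℤ → ℤ → GasState)
    (hRxL : ∀ c : GasState, RxL (fun _ _ => c) = fun _ _ => c)
    (hRxR : ∀ c : GasState, RxR (fun _ _ => c) = fun _ _ => c)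
    (hRyL : ∀ c : GasState, RyL (fun _ _ => c) = fun _ _ => c)
    (hRyR : ∀ c : GasState, RyR (fun _ _ => c) = fun _ _ => c)
    -- cell data and hydrostatic variables w = (ρ/α, u, v, p/β)
    (ρc uc vc pc : ℤ → ℤ → ℝ)
    (w : ℤ → ℤ → GasState)
    (hw : ∀ i j, w i j = (ρc i j / α (P i j), uc i j, vc i j, pc i j / β (P i j)))
    -- reconstructed primitive states at the faces, transformed back with α, β
    (qxL qxR qyL qyR : ℤ → ℤ → GasState)
    (hqxL : ∀ i j, qxL i j = ((RxL w i j).1 * α (Mx i j), (RxL w i j).2.1,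
      (RxL w i j).2.2.1, (RxL w i j).2.2.2 * β (Mx i j)))
    (hqxR : ∀ i j, qxR i j = ((RxR w i j).1 * α (Mx i j), (RxR w i j).2.1,
      (RxR w i j).2.2.1, (RxR w i j).2.2.2 * β (Mx i j)))
    (hqyL : ∀ i j, qyL i j = ((RyL w i j).1 * α (My i j), (RyL w i j).2.1,
      (RyL w i j).2.2.1, (RyL w i j).2.2.2 * β (My i j)))
    (hqyR : ∀ i j, qyR i j = ((RyR w i j).1 * α (My i j), (RyR w i j).2.1,
      (RyR w i j).2.2.1, (RyR w i j).2.2.2 * β (My i j)))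
    -- hydrostatic initial data
    (ρ₀ p₀ : ℝ) (hρ₀ : 0 < ρ₀) (hp₀ : 0 < p₀)
    (hu : ∀ i j, uc i j = 0) (hv : ∀ i j, vc i j = 0)
    (hρ : ∀ i j, ρc i j / α (P i j) = ρ₀)
    (hp : ∀ i j, pc i j / β (P i j) = p₀)
    -- discretized gravitational source term
    (S : ℤ → ℤ → ℝ × ℝ × ℝ × ℝ)
    (hS : ∀ i j, S i j =
      (0,
       p₀ * ρc i j / (ρ₀ * α (P i j)) *
         ((Y i j - Y i (j-1)) * β (Mx i j) - (Y (i-1) j - Y (i-1) (j-1)) * β (Mx (i-1) j)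
          - ((Y i j - Y (i-1) j) * β (My i j) - (Y i (j-1) - Y (i-1) (j-1)) * β (My i (j-1)))),
       p₀ * ρc i j / (ρ₀ * α (P i j)) *
         (-((X i j - X i (j-1)) * β (Mx i j) - (X (i-1) j - X (i-1) (j-1)) * β (Mx (i-1) j))
          + ((X i j - X (i-1) j) * β (My i j) - (X i (j-1) - X (i-1) (j-1)) * β (My i (j-1)))),
       0))
    -- the semi-discrete finite volume scheme
    (qdot : ℤ → ℤ → ℝ × ℝ × ℝ × ℝ)
    (hscheme : ∀ i j, (Ωc i j) • qdot i j =
      S i j -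
        ((Ax i j) • Fhat (qxL i j) (qxR i j) (ℓ i j)
          - (Ax (i-1) j) • Fhat (qxL (i-1) j) (qxR (i-1) j) (ℓ (i-1) j)
          + (Ay i j) • Ghat (qyL i j) (qyR i j) (m i j)
          - (Ay i (j-1)) • Ghat (qyL i (j-1)) (qyR i (j-1)) (m i (j-1)))) :
    ∀ i j : ℤ,
      -- the flux terms exactly cancel the discretized source term
      ((Ax i j) • Fhat (qxL i j) (qxR i j) (ℓ i j)
        - (Ax (i-1) j) • Fhat (qxL (i-1) j) (qxR (i-1) j) (ℓ (i-1) j)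
        + (Ay i j) • Ghat (qyL i j) (qyR i j) (m i j)
        - (Ay i (j-1)) • Ghat (qyL i (j-1)) (qyR i (j-1)) (m i (j-1))) = S i j ∧
      -- hence the discrete hydrostatic state is preserved exactly
      qdot i j = 0 :=
  alpha_beta_scheme_well_balanced_general X Y Ax Ay ℓ m hAx hAy hAx0 hAy0 hℓ hm Ωc hΩc α β P Mx My E
    Fhat Ghat hFcons hGcons RxL RxR RyL RyR hRxL hRxR hRyL hRyR ρc uc vc pc w hw qxL qxR qyL qyR
    hqxL hqxR hqyL hqyR ρ₀ p₀ hρ₀ hu hv hρ hp S hS qdot hscheme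
end

section
/- Let φ, α, β : ℝ² → ℝ be differentiable with α, β > 0, let ρ₀, p₀ > 0 be constants, and assume the hydrostatic relation p₀ ∇β = −ρ₀ α ∇φ holds (i.e., p̄ = p₀β and ρ̄ = ρ₀α satisfy the hydrostatic equation). Let (ξ,η) ↦ (x(ξ,η), y(ξ,η)) be a twice continuously differentiable map with Jacobian J = x_ξ y_η − x_η y_ξ ≠ 0. Then for any function ρ of (ξ,η), composing φ, α, β with the map, the gravitational source terms can be rewritten in divergence-like form: −J ρ (∂φ/∂x) = (p₀ ρ/(ρ₀ α)) [ ∂_ξ(β y_η) − ∂_η(β y_ξ) ] and −J ρ (∂φ/∂y) = (p₀ ρ/(ρ₀ α)) [ −∂_ξ(β x_η) + ∂_η(β x_ξ) ]. -/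
/-!
Write `B = β ∘ (x, y)`. By the product rule and the symmetry of the mixed partials of `y`,
`∂_ξ(B y_η) - ∂_η(B y_ξ) = B_ξ y_η - B_η y_ξ`, and by the chain rule this equals `β_x J`.
Likewise `-∂_ξ(B x_η) + ∂_η(B x_ξ) = β_y J`. The hydrostatic relation
`p₀ β_x = -ρ₀ α φ_x` (resp. for `y`) then turns `β_x J` into `-J ρ₀ α φ_x / p₀`.
-/

/-- Partial derivative of `f : ℝ² → ℝ` with respect to the first coordinate. -/
noncomputable def pd1 (f : ℝ × ℝ → ℝ) (z : ℝ × ℝ) : ℝ := fderiv ℝ f z (1, 0)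

/-- Partial derivative of `f : ℝ² → ℝ` with respect to the second coordinate. -/
noncomputable def pd2 (f : ℝ × ℝ → ℝ) (z : ℝ × ℝ) : ℝ := fderiv ℝ f z (0, 1)

section General

variable {E F : Type*} [NormedAddCommGroup E] [NormedSpace ℝ E]
  [NormedAddCommGroup F] [NormedSpace ℝ F] {u : E → F} {z : E}

theorem ContDiffAt.differentiableAt_fderiv_apply (hu : ContDiffAt ℝ 2 u z) (v : E) :
    DifferentiableAt ℝ (fun w => fderiv ℝ u w v) z :=
  ((hu.fderiv_right (m := 1) le_rfl).differentiableAt one_ne_zero).clm_apply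
    (differentiableAt_const v)

theorem ContDiffAt.fderiv_fderiv_apply_comm (hu : ContDiffAt ℝ 2 u z) (v w : E) :
    fderiv ℝ (fun p => fderiv ℝ u p w) z v = fderiv ℝ (fun p => fderiv ℝ u p v) z w := by
  have hd : DifferentiableAt ℝ (fderiv ℝ u) z :=
    (hu.fderiv_right (m := 1) le_rfl).differentiableAt one_ne_zero
  simp only [fderiv_clm_apply hd (differentiableAt_const _), fderiv_const_apply,
    ContinuousLinearMap.comp_zero, zero_add, ContinuousLinearMap.flip_apply]
  exact (hu.isSymmSndFDerivAt (by simp)) v w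

end General

section Partials

variable {f g u : ℝ × ℝ → ℝ} {z : ℝ × ℝ}

theorem fderiv_apply_eq_pd (a b : ℝ) :
    fderiv ℝ f z (a, b) = a * pd1 f z + b * pd2 f z := by
  have hab : ((a, b) : ℝ × ℝ) = a • ((1 : ℝ), (0 : ℝ)) + b • ((0 : ℝ), (1 : ℝ)) := by simp
  rw [hab, map_add, map_smul, map_smul, smul_eq_mul, smul_eq_mul, pd1, pd2]

theorem fderiv_mul_apply_eq (hf : DifferentiableAt ℝ f z) (hg : DifferentiableAt ℝ g z)
    (v : ℝ × ℝ) :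
    fderiv ℝ (fun w => f w * g w) z v = fderiv ℝ f z v * g z + f z * fderiv ℝ g z v := by
  simp only [fderiv_fun_mul hf hg, FunLike.coe_add, Pi.add_apply,
    FunLike.coe_smul, Pi.smul_apply, smul_eq_mul]
  ring

theorem pd1_pd2_comm (hu : ContDiffAt ℝ 2 u z) : pd1 (pd2 u) z = pd2 (pd1 u) z :=
  hu.fderiv_fderiv_apply_comm (1, 0) (0, 1)

theorem pd1_mul_pd2_sub_pd2_mul_pd1 (hf : DifferentiableAt ℝ f z) (hu : ContDiffAt ℝ 2 u z) :
    pd1 (fun w => f w * pd2 u w) z - pd2 (fun w => f w * pd1 u w) z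
      = pd1 f z * pd2 u z - pd2 f z * pd1 u z := by
  have h₁ : pd1 (fun w => f w * pd2 u w) z = pd1 f z * pd2 u z + f z * pd1 (pd2 u) z :=
    fderiv_mul_apply_eq hf (hu.differentiableAt_fderiv_apply (0, 1)) (1, 0)
  have h₂ : pd2 (fun w => f w * pd1 u w) z = pd2 f z * pd1 u z + f z * pd2 (pd1 u) z :=
    fderiv_mul_apply_eq hf (hu.differentiableAt_fderiv_apply (1, 0)) (0, 1)
  rw [h₁, h₂, pd1_pd2_comm hu]
  ring

theorem fderiv_comp_prodMk_apply {β x y : ℝ × ℝ → ℝ} (hβ : DifferentiableAt ℝ β (x z, y z))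
    (hx : DifferentiableAt ℝ x z) (hy : DifferentiableAt ℝ y z) (v : ℝ × ℝ) :
    fderiv ℝ (fun w => β (x w, y w)) z v
      = pd1 β (x z, y z) * fderiv ℝ x z v + pd2 β (x z, y z) * fderiv ℝ y z v := by
  have hcomp := hβ.hasFDerivAt.comp z (hx.hasFDerivAt.prodMk hy.hasFDerivAt)
  rw [show (fun w => β (x w, y w)) = β ∘ fun w => (x w, y w) from rfl, hcomp.fderiv,
    ContinuousLinearMap.comp_apply, ContinuousLinearMap.prod_apply, fderiv_apply_eq_pd]
  ring

theorem pd1_comp_prodMk {β x y : ℝ × ℝ → ℝ} (hβ : DifferentiableAt ℝ β (x z, y z))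
    (hx : DifferentiableAt ℝ x z) (hy : DifferentiableAt ℝ y z) :
    pd1 (fun w => β (x w, y w)) z = pd1 β (x z, y z) * pd1 x z + pd2 β (x z, y z) * pd1 y z :=
  fderiv_comp_prodMk_apply hβ hx hy (1, 0)

theorem pd2_comp_prodMk {β x y : ℝ × ℝ → ℝ} (hβ : DifferentiableAt ℝ β (x z, y z))
    (hx : DifferentiableAt ℝ x z) (hy : DifferentiableAt ℝ y z) :
    pd2 (fun w => β (x w, y w)) z = pd1 β (x z, y z) * pd2 x z + pd2 β (x z, y z) * pd2 y z :=
  fderiv_comp_prodMk_apply hβ hx hy (0, 1)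

end Partials

theorem source_term_divergence_form_general
    (φ α β : ℝ × ℝ → ℝ)
    (hβ : Differentiable ℝ β)
    (hαpos : ∀ z, 0 < α z)
    (ρ₀ p₀ : ℝ) (hρ₀ : 0 < ρ₀)
    (hhs1 : ∀ z, p₀ * pd1 β z = -(ρ₀ * α z) * pd1 φ z)
    (hhs2 : ∀ z, p₀ * pd2 β z = -(ρ₀ * α z) * pd2 φ z)
    (x y : ℝ × ℝ → ℝ) (hx : ContDiff ℝ 2 x) (hy : ContDiff ℝ 2 y)
    (J : ℝ × ℝ → ℝ)
    (hJ : ∀ z, J z = pd1 x z * pd2 y z - pd2 x z * pd1 y z)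
    (ρ : ℝ × ℝ → ℝ) :
    ∀ z : ℝ × ℝ,
      (-(J z) * ρ z * pd1 φ (x z, y z)
        = p₀ * ρ z / (ρ₀ * α (x z, y z)) *
            (pd1 (fun w => β (x w, y w) * pd2 y w) z
              - pd2 (fun w => β (x w, y w) * pd1 y w) z)) ∧
      (-(J z) * ρ z * pd2 φ (x z, y z)
        = p₀ * ρ z / (ρ₀ * α (x z, y z)) *
            (-pd1 (fun w => β (x w, y w) * pd2 x w) z
              + pd2 (fun w => β (x w, y w) * pd1 x w) z)) := by
  intro z
  have hxz := hx.differentiable (by norm_num) z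
  have hyz := hy.differentiable (by norm_num) z
  have hB : DifferentiableAt ℝ (fun w => β (x w, y w)) z :=
    (hβ _).comp z (hxz.prodMk hyz)
  have hden : ρ₀ * α (x z, y z) ≠ 0 := (mul_pos hρ₀ (hαpos _)).ne'
  rw [neg_add_eq_sub, ← neg_sub (pd1 _ z), pd1_mul_pd2_sub_pd2_mul_pd1 hB hx.contDiffAt,
    pd1_mul_pd2_sub_pd2_mul_pd1 hB hy.contDiffAt, pd1_comp_prodMk (hβ _) hxz hyz,
    pd2_comp_prodMk (hβ _) hxz hyz, hJ]
  simp only [div_mul_eq_mul_div, eq_div_iff hden]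
  constructor
  · linear_combination -(ρ z * (pd1 x z * pd2 y z - pd2 x z * pd1 y z)) * hhs1 (x z, y z)
  · linear_combination -(ρ z * (pd1 x z * pd2 y z - pd2 x z * pd1 y z)) * hhs2 (x z, y z)

/-- **Divergence form of the gravitational source terms.**
If `p̄ = p₀ β` and `ρ̄ = ρ₀ α` satisfy the hydrostatic relation `p₀ ∇β = -ρ₀ α ∇φ`, and
`(ξ,η) ↦ (x(ξ,η), y(ξ,η))` is a C² map with Jacobian `J = x_ξ y_η - x_η y_ξ ≠ 0`, then
for any function `ρ` of `(ξ,η)` the gravitational source terms admit the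
divergence-like form
`-J ρ φ_x = (p₀ ρ/(ρ₀ α)) [∂_ξ(β y_η) - ∂_η(β y_ξ)]` and
`-J ρ φ_y = (p₀ ρ/(ρ₀ α)) [-∂_ξ(β x_η) + ∂_η(β x_ξ)]`. -/
theorem source_term_divergence_form
    (φ α β : ℝ × ℝ → ℝ)
    (hφ : Differentiable ℝ φ) (hα : Differentiable ℝ α) (hβ : Differentiable ℝ β)
    (hαpos : ∀ z, 0 < α z) (hβpos : ∀ z, 0 < β z)
    (ρ₀ p₀ : ℝ) (hρ₀ : 0 < ρ₀) (hp₀ : 0 < p₀)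
    (hhs1 : ∀ z, p₀ * pd1 β z = -(ρ₀ * α z) * pd1 φ z)
    (hhs2 : ∀ z, p₀ * pd2 β z = -(ρ₀ * α z) * pd2 φ z)
    (x y : ℝ × ℝ → ℝ) (hx : ContDiff ℝ 2 x) (hy : ContDiff ℝ 2 y)
    (J : ℝ × ℝ → ℝ)
    (hJ : ∀ z, J z = pd1 x z * pd2 y z - pd2 x z * pd1 y z)
    (hJ0 : ∀ z, J z ≠ 0)
    (ρ : ℝ × ℝ → ℝ) :
    ∀ z : ℝ × ℝ,
      (-(J z) * ρ z * pd1 φ (x z, y z)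
        = p₀ * ρ z / (ρ₀ * α (x z, y z)) *
            (pd1 (fun w => β (x w, y w) * pd2 y w) z
              - pd2 (fun w => β (x w, y w) * pd1 y w) z)) ∧
      (-(J z) * ρ z * pd2 φ (x z, y z)
        = p₀ * ρ z / (ρ₀ * α (x z, y z)) *
            (-pd1 (fun w => β (x w, y w) * pd2 x w) z
              + pd2 (fun w => β (x w, y w) * pd1 x w) z)) :=
  source_term_divergence_form_general φ α β hβ hαpos ρ₀ p₀ hρ₀ hhs1 hhs2 x y hx hy J hJ ρ
end

section
/- Let ΔT ∈ (0,1) and μ > 0, and define T̄(x) = 1 + ΔT tanh(x/μ) and p̄(x) = exp( −( x − ΔT μ log( cosh(x/μ) + ΔT sinh(x/μ) ) ) / (1 − ΔT²) ), ρ̄(x) = p̄(x)/T̄(x). Then cosh(x/μ) + ΔT sinh(x/μ) > 0 and T̄(x) > 0 for all x ∈ ℝ, and (ρ̄, p̄) satisfies the one-dimensional hydrostatic equation p̄′(x) = −ρ̄(x) for the gravitational potential φ(x) = x; with the ideal gas equation of state p = ρT the temperature of this solution is exactly T̄. -/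
/-- Temperature profile of the tanh-test. -/
noncomputable def tanhT (ΔT μ x : ℝ) : ℝ := 1 + ΔT * Real.tanh (x / μ)

/-- Pressure profile of the tanh-test. -/
noncomputable def tanhP (ΔT μ x : ℝ) : ℝ :=
  Real.exp (-(x - ΔT * μ * Real.log (Real.cosh (x / μ) + ΔT * Real.sinh (x / μ)))
    / (1 - ΔT ^ 2))

/-- Density profile of the tanh-test (ideal gas: `ρ̄ = p̄ / T̄`). -/
noncomputable def tanhRho (ΔT μ x : ℝ) : ℝ := tanhP ΔT μ x / tanhT ΔT μ x

open Real

/-!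
Write `g(y) = cosh y + ΔT sinh y`; since `|sinh y| < cosh y`, `g > 0`, and `T̄(x) = g(x/μ) / cosh(x/μ)`.
The exponent of `p̄` has derivative `-(g - ΔT sinh - ΔT² cosh) / ((1 - ΔT²) g) = -cosh / g = -1 / T̄`
(at `y = x/μ`), so `p̄′ = -p̄ / T̄ = -ρ̄`.
-/

theorem abs_sinh_lt_cosh (y : ℝ) : |sinh y| < cosh y := by
  rw [abs_sinh, ← cosh_abs]
  exact sinh_lt_cosh _

theorem cosh_add_mul_sinh_pos {a : ℝ} (ha : |a| ≤ 1) (y : ℝ) : 0 < cosh y + a * sinh y := by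
  have h : |a * sinh y| ≤ |sinh y| := by
    rw [abs_mul]
    exact mul_le_of_le_one_left (abs_nonneg _) ha
  linarith [neg_abs_le (a * sinh y), abs_sinh_lt_cosh y]

theorem one_add_mul_tanh_eq (a y : ℝ) : 1 + a * tanh y = (cosh y + a * sinh y) / cosh y := by
  rw [tanh_eq_sinh_div_cosh]
  field_simp [(cosh_pos y).ne']

theorem tanhT_pos {ΔT : ℝ} (hΔT : |ΔT| ≤ 1) (μ x : ℝ) : 0 < tanhT ΔT μ x := by
  rw [tanhT, one_add_mul_tanh_eq]
  exact div_pos (cosh_add_mul_sinh_pos hΔT _) (cosh_pos _)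

theorem hasDerivAt_log_cosh_add_mul_sinh {a : ℝ} (ha : |a| ≤ 1) (μ x : ℝ) :
    HasDerivAt (fun x => log (cosh (x / μ) + a * sinh (x / μ)))
      ((sinh (x / μ) + a * cosh (x / μ)) / (μ * (cosh (x / μ) + a * sinh (x / μ)))) x := by
  have hy : HasDerivAt (fun x => x / μ) (1 / μ) x := (hasDerivAt_id x).div_const μ
  have hg : HasDerivAt (fun x => cosh (x / μ) + a * sinh (x / μ))
      (sinh (x / μ) * (1 / μ) + a * (cosh (x / μ) * (1 / μ))) x :=
    ((hasDerivAt_cosh _).comp x hy).add (((hasDerivAt_sinh _).comp x hy).const_mul a)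
  convert hg.log (cosh_add_mul_sinh_pos ha _).ne' using 1
  rw [mul_comm μ, ← div_div]
  ring

theorem hasDerivAt_tanhP_exponent {ΔT μ : ℝ} (hΔT : |ΔT| < 1) (hμ : μ ≠ 0) (x : ℝ) :
    HasDerivAt (fun x => -(x - ΔT * μ * log (cosh (x / μ) + ΔT * sinh (x / μ))) / (1 - ΔT ^ 2))
      (-(1 / tanhT ΔT μ x)) x := by
  have hL := hasDerivAt_log_cosh_add_mul_sinh hΔT.le μ x
  have hg := (cosh_add_mul_sinh_pos hΔT.le (x / μ)).ne'
  have hΔT2 : 1 - ΔT ^ 2 ≠ 0 := by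
    have := (sq_lt_one_iff_abs_lt_one ΔT).mpr hΔT
    linarith
  refine (((hasDerivAt_id' x).sub (hL.const_mul (ΔT * μ))).neg.div_const _).congr_deriv ?_
  rw [tanhT, one_add_mul_tanh_eq]
  field_simp
  ring

theorem hasDerivAt_tanhP {ΔT μ : ℝ} (hΔT : |ΔT| < 1) (hμ : μ ≠ 0) (x : ℝ) :
    HasDerivAt (tanhP ΔT μ) (-tanhRho ΔT μ x) x := by
  refine (hasDerivAt_tanhP_exponent hΔT hμ x).exp.congr_deriv ?_
  rw [tanhRho, tanhP]
  ring

/-- **The tanh-profile hydrostatic solution.**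
For `ΔT ∈ (0,1)` and `μ > 0`, the quantities `cosh(x/μ) + ΔT sinh(x/μ)` and
`T̄(x) = 1 + ΔT tanh(x/μ)` are positive for all `x`, the pair `(ρ̄, p̄)` satisfies the
one-dimensional hydrostatic equation `p̄′(x) = -ρ̄(x)` for the potential `φ(x) = x`, and
under the ideal gas EoS `p = ρ T` the temperature of the solution is exactly `T̄`. -/
theorem tanh_profile_hydrostatic (ΔT μ : ℝ) (hΔT0 : 0 < ΔT) (hΔT1 : ΔT < 1) (hμ : 0 < μ) :
    ∀ x : ℝ,
      0 < Real.cosh (x / μ) + ΔT * Real.sinh (x / μ) ∧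
      0 < tanhT ΔT μ x ∧
      deriv (tanhP ΔT μ) x = -tanhRho ΔT μ x ∧
      tanhP ΔT μ x = tanhRho ΔT μ x * tanhT ΔT μ x := by
  intro x
  have hΔT : |ΔT| < 1 := abs_lt.mpr ⟨by linarith, hΔT1⟩
  have hT := tanhT_pos hΔT.le μ x
  exact ⟨cosh_add_mul_sinh_pos hΔT.le _, hT, (hasDerivAt_tanhP hΔT hμ.ne' x).deriv,
    (div_mul_cancel₀ _ hT.ne').symm⟩
end

section
/- Let γ > 1 and u₀, v₀, p₀ ∈ ℝ, and define on ℝ × ℝ²: ρ(t,x,y) = 1 + (1/5) sin(π(x + y − t(u₀+v₀))), u ≡ u₀, v ≡ v₀, p(t,x,y) = p₀ + t(u₀+v₀) − x − y + (1/(5π)) cos(π(x + y − t(u₀+v₀))), with gravitational potential φ(x,y) = x + y and total energy E = p/(γ−1) + (1/2)ρ(u² + v²) + ρφ. Then these fields satisfy the two-dimensional compressible Euler equations with gravitational source term for all (t,x,y): ∂ρ/∂t + ∂(ρu)/∂x + ∂(ρv)/∂y = 0, ∂(ρu)/∂t + ∂(p + ρu²)/∂x + ∂(ρuv)/∂y =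 −ρ ∂φ/∂x, ∂(ρv)/∂t + ∂(ρuv)/∂x + ∂(p + ρv²)/∂y = −ρ ∂φ/∂y, and ∂E/∂t + ∂((E+p)u)/∂x + ∂((E+p)v)/∂y = 0. -/
open Real

/-!
The flow is a hydrostatic equilibrium `∇p = -ρ ∇φ` carried along by the constant velocity
`(u₀, v₀)`. Writing points as `(t, x, y)`, both `ρ` and `p` are profiles `R(ξ)`, `P(ξ)` of the
phase `ξ = x + y - (u₀ + v₀) t`, so they are constant along the world-lines `(1, u₀, v₀)`, and
`P' = -R`, which is hydrostatic balance for `φ = x + y`. With constant velocity every flux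
divergence collapses to a material derivative plus pressure-gradient terms, and these cancel
the gravitational source exactly.
-/

theorem ContinuousLinearMap.apply_triple {R M : Type*} [Semiring R] [TopologicalSpace R]
    [AddCommMonoid M] [TopologicalSpace M] [Module R M] (L : R × R × R →L[R] M) (a b c : R) :
    L (a, b, c) = a • L (1, 0, 0) + b • L (0, 1, 0) + c • L (0, 0, 1) := by
  have : ((a, b, c) : R × R × R) = a • (1, 0, 0) + b • (0, 1, 0) + c • (0, 0, 1) := by simp
  rw [this, map_add, map_add, map_smul, map_smul, map_smul]

section Balance

variable {ρ p φ : ℝ × ℝ × ℝ → ℝ} {z : ℝ × ℝ × ℝ} {u₀ v₀ : ℝ}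

theorem mass_balance (hρ : DifferentiableAt ℝ ρ z) (hρ_tr : fderiv ℝ ρ z (1, u₀, v₀) = 0) :
    fderiv ℝ ρ z (1, 0, 0) + fderiv ℝ (fun w => ρ w * u₀) z (0, 1, 0)
      + fderiv ℝ (fun w => ρ w * v₀) z (0, 0, 1) = 0 := by
  rw [(fderiv ℝ ρ z).apply_triple] at hρ_tr
  simp only [fderiv_mul_const hρ, smul_apply, smul_eq_mul] at hρ_tr ⊢
  linear_combination hρ_tr

theorem momentum_x_balance (hρ : DifferentiableAt ℝ ρ z) (hp : DifferentiableAt ℝ p z)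
    (hρ_tr : fderiv ℝ ρ z (1, u₀, v₀) = 0)
    (hp_x : fderiv ℝ p z (0, 1, 0) = -ρ z * fderiv ℝ φ z (0, 1, 0)) :
    fderiv ℝ (fun w => ρ w * u₀) z (1, 0, 0) + fderiv ℝ (fun w => p w + ρ w * u₀ ^ 2) z (0, 1, 0)
      + fderiv ℝ (fun w => ρ w * u₀ * v₀) z (0, 0, 1) = -ρ z * fderiv ℝ φ z (0, 1, 0) := by
  simp only [fderiv_fun_add hp (hρ.mul_const _), fderiv_mul_const (hρ.mul_const _),
    fderiv_mul_const hρ]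
  rw [(fderiv ℝ ρ z).apply_triple] at hρ_tr
  simp only [add_apply, smul_apply, smul_eq_mul] at hρ_tr ⊢
  linear_combination u₀ * hρ_tr + hp_x

theorem momentum_y_balance (hρ : DifferentiableAt ℝ ρ z) (hp : DifferentiableAt ℝ p z)
    (hρ_tr : fderiv ℝ ρ z (1, u₀, v₀) = 0)
    (hp_y : fderiv ℝ p z (0, 0, 1) = -ρ z * fderiv ℝ φ z (0, 0, 1)) :
    fderiv ℝ (fun w => ρ w * v₀) z (1, 0, 0) + fderiv ℝ (fun w => ρ w * u₀ * v₀) z (0, 1, 0)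
      + fderiv ℝ (fun w => p w + ρ w * v₀ ^ 2) z (0, 0, 1) = -ρ z * fderiv ℝ φ z (0, 0, 1) := by
  simp only [fderiv_fun_add hp (hρ.mul_const _), fderiv_mul_const (hρ.mul_const _),
    fderiv_mul_const hρ]
  rw [(fderiv ℝ ρ z).apply_triple] at hρ_tr
  simp only [add_apply, smul_apply, smul_eq_mul] at hρ_tr ⊢
  linear_combination v₀ * hρ_tr + hp_y

theorem energy_balance (γ : ℝ) (hρ : DifferentiableAt ℝ ρ z) (hp : DifferentiableAt ℝ p z)
    (hφ : DifferentiableAt ℝ φ z)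
    (hρ_tr : fderiv ℝ ρ z (1, u₀, v₀) = 0) (hp_tr : fderiv ℝ p z (1, u₀, v₀) = 0)
    (hp_x : fderiv ℝ p z (0, 1, 0) = -ρ z * fderiv ℝ φ z (0, 1, 0))
    (hp_y : fderiv ℝ p z (0, 0, 1) = -ρ z * fderiv ℝ φ z (0, 0, 1))
    (hφ_t : fderiv ℝ φ z (1, 0, 0) = 0) :
    let E : ℝ × ℝ × ℝ → ℝ := fun w =>
      p w / (γ - 1) + (1 / 2) * ρ w * (u₀ ^ 2 + v₀ ^ 2) + ρ w * φ w
    fderiv ℝ E z (1, 0, 0) + fderiv ℝ (fun w => (E w + p w) * u₀) z (0, 1, 0)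
      + fderiv ℝ (fun w => (E w + p w) * v₀) z (0, 0, 1) = 0 := by
  intro E
  have hE : HasFDerivAt E _ z :=
    ((hp.hasFDerivAt.mul_const (γ - 1)⁻¹).add ((hρ.hasFDerivAt.const_mul _).mul_const _)).add
      (hρ.hasFDerivAt.mul hφ.hasFDerivAt)
  have hEp : DifferentiableAt ℝ (fun w => E w + p w) z := hE.differentiableAt.add hp
  simp only [fderiv_mul_const hEp, fderiv_fun_add hE.differentiableAt hp, hE.fderiv]
  rw [(fderiv ℝ ρ z).apply_triple] at hρ_tr
  rw [(fderiv ℝ p z).apply_triple] at hp_tr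
  simp only [add_apply, smul_apply, smul_eq_mul] at hρ_tr hp_tr ⊢
  -- the material derivative of `E` is `ρ (φ_t + u₀ φ_x + v₀ φ_y)`; the pressure work
  -- `u₀ p_x + v₀ p_y` cancels all of it but `ρ φ_t`
  linear_combination (1 / (γ - 1)) * hp_tr + u₀ * hp_x + v₀ * hp_y
    + ((u₀ ^ 2 + v₀ ^ 2) / 2 + φ z) * hρ_tr + ρ z * hφ_t

end Balance

def wavePhase (c : ℝ) (w : ℝ × ℝ × ℝ) : ℝ := w.2.1 + w.2.2 - w.1 * c

theorem hasFDerivAt_add_coords (z : ℝ × ℝ × ℝ) :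
    HasFDerivAt (fun w : ℝ × ℝ × ℝ => w.2.1 + w.2.2)
      (ContinuousLinearMap.fst ℝ ℝ ℝ ∘L ContinuousLinearMap.snd ℝ ℝ (ℝ × ℝ)
        + ContinuousLinearMap.snd ℝ ℝ ℝ ∘L ContinuousLinearMap.snd ℝ ℝ (ℝ × ℝ)) z :=
  hasFDerivAt_snd.fst.add hasFDerivAt_snd.snd

theorem fderiv_add_coords_apply (z v : ℝ × ℝ × ℝ) :
    fderiv ℝ (fun w : ℝ × ℝ × ℝ => w.2.1 + w.2.2) z v = v.2.1 + v.2.2 := by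
  simp [(hasFDerivAt_add_coords z).fderiv]

theorem fderiv_comp_wavePhase_apply {g : ℝ → ℝ} {c : ℝ} {z : ℝ × ℝ × ℝ}
    (hg : DifferentiableAt ℝ g (wavePhase c z)) (v : ℝ × ℝ × ℝ) :
    fderiv ℝ (fun w => g (wavePhase c w)) z v = deriv g (wavePhase c z) * wavePhase c v := by
  have hξ : HasFDerivAt (wavePhase c) _ z :=
    (hasFDerivAt_add_coords z).sub (hasFDerivAt_fst.mul_const c)
  rw [HasFDerivAt.fderiv (f := fun w => g (wavePhase c w)) (hg.hasDerivAt.comp_hasFDerivAt z hξ)]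
  simp [wavePhase, mul_comm c]

theorem differentiableAt_comp_wavePhase {g : ℝ → ℝ} {c : ℝ} {z : ℝ × ℝ × ℝ}
    (hg : DifferentiableAt ℝ g (wavePhase c z)) :
    DifferentiableAt ℝ (fun w => g (wavePhase c w)) z := by
  have hξ : DifferentiableAt ℝ (wavePhase c) z := by unfold wavePhase; fun_prop
  exact hg.comp z hξ

theorem fderiv_comp_wavePhase_transport {g : ℝ → ℝ} {u₀ v₀ : ℝ} {z : ℝ × ℝ × ℝ}
    (hg : DifferentiableAt ℝ g (wavePhase (u₀ + v₀) z)) :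
    fderiv ℝ (fun w => g (wavePhase (u₀ + v₀) w)) z (1, u₀, v₀) = 0 := by
  have h_ortho : wavePhase (u₀ + v₀) (1, u₀, v₀) = 0 := by simp [wavePhase]
  rw [fderiv_comp_wavePhase_apply hg, h_ortho, mul_zero]

theorem fderiv_comp_wavePhase_eq_neg_mul {R P : ℝ → ℝ} {c : ℝ} {z v : ℝ × ℝ × ℝ}
    (hP : HasDerivAt P (-R (wavePhase c z)) (wavePhase c z)) (hv : v.1 = 0) :
    fderiv ℝ (fun w => P (wavePhase c w)) z v
      = -R (wavePhase c z) * fderiv ℝ (fun w : ℝ × ℝ × ℝ => w.2.1 + w.2.2) z v := by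
  have hv' : wavePhase c v = v.2.1 + v.2.2 := by simp [wavePhase, hv]
  rw [fderiv_comp_wavePhase_apply hP.differentiableAt, hP.deriv, fderiv_add_coords_apply, hv']

noncomputable def densityProfile (s : ℝ) : ℝ := 1 + 1 / 5 * sin (π * s)

noncomputable def pressureProfile (p₀ s : ℝ) : ℝ := p₀ - s + 1 / (5 * π) * cos (π * s)

theorem hasDerivAt_pressureProfile (p₀ s : ℝ) :
    HasDerivAt (pressureProfile p₀) (-densityProfile s) s := by
  refine (((hasDerivAt_id' s).const_sub p₀).fun_add
    ((((hasDerivAt_id' s).const_mul π).cos).const_mul (1 / (5 * π)))).congr_deriv ?_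
  simp only [densityProfile]
  field_simp
  ring

theorem exact_solution_euler_gravity_general (γ u₀ v₀ p₀ : ℝ) :
    let ρ : ℝ × ℝ × ℝ → ℝ := fun z =>
      1 + (1 / 5) * Real.sin (π * (z.2.1 + z.2.2 - z.1 * (u₀ + v₀)))
    let p : ℝ × ℝ × ℝ → ℝ := fun z =>
      p₀ + z.1 * (u₀ + v₀) - z.2.1 - z.2.2
        + (1 / (5 * π)) * Real.cos (π * (z.2.1 + z.2.2 - z.1 * (u₀ + v₀)))
    let φ : ℝ × ℝ × ℝ → ℝ := fun z => z.2.1 + z.2.2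
    let Etot : ℝ × ℝ × ℝ → ℝ := fun z =>
      p z / (γ - 1) + (1 / 2) * ρ z * (u₀ ^ 2 + v₀ ^ 2) + ρ z * φ z
    let et : ℝ × ℝ × ℝ := (1, 0, 0)
    let ex : ℝ × ℝ × ℝ := (0, 1, 0)
    let ey : ℝ × ℝ × ℝ := (0, 0, 1)
    ∀ z : ℝ × ℝ × ℝ,
      -- mass conservation
      fderiv ℝ ρ z et + fderiv ℝ (fun w => ρ w * u₀) z ex
        + fderiv ℝ (fun w => ρ w * v₀) z ey = 0 ∧
      -- x-momentum balance
      fderiv ℝ (fun w => ρ w * u₀) z et + fderiv ℝ (fun w => p w + ρ w * u₀ ^ 2) z ex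
        + fderiv ℝ (fun w => ρ w * u₀ * v₀) z ey = -(ρ z) * fderiv ℝ φ z ex ∧
      -- y-momentum balance
      fderiv ℝ (fun w => ρ w * v₀) z et + fderiv ℝ (fun w => ρ w * u₀ * v₀) z ex
        + fderiv ℝ (fun w => p w + ρ w * v₀ ^ 2) z ey = -(ρ z) * fderiv ℝ φ z ey ∧
      -- energy conservation
      fderiv ℝ Etot z et + fderiv ℝ (fun w => (Etot w + p w) * u₀) z ex
        + fderiv ℝ (fun w => (Etot w + p w) * v₀) z ey = 0 := by
  intro ρ p φ Etot et ex ey z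
  have hp_eq : p = fun w => pressureProfile p₀ (wavePhase (u₀ + v₀) w) := by
    funext w
    simp only [p, pressureProfile, wavePhase]
    ring
  have hR : DifferentiableAt ℝ densityProfile (wavePhase (u₀ + v₀) z) := by
    unfold densityProfile; fun_prop
  have hP := hasDerivAt_pressureProfile p₀ (wavePhase (u₀ + v₀) z)
  have hρ : DifferentiableAt ℝ ρ z := differentiableAt_comp_wavePhase hR
  have hp : DifferentiableAt ℝ p z := hp_eq ▸ differentiableAt_comp_wavePhase hP.differentiableAt
  have hφ : DifferentiableAt ℝ φ z := (hasFDerivAt_add_coords z).differentiableAt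
  have hρ_tr : fderiv ℝ ρ z (1, u₀, v₀) = 0 := fderiv_comp_wavePhase_transport hR
  have hp_tr : fderiv ℝ p z (1, u₀, v₀) = 0 :=
    hp_eq ▸ fderiv_comp_wavePhase_transport hP.differentiableAt
  have hp_grad (v : ℝ × ℝ × ℝ) (hv : v.1 = 0) : fderiv ℝ p z v = -ρ z * fderiv ℝ φ z v :=
    hp_eq ▸ fderiv_comp_wavePhase_eq_neg_mul hP hv
  have hφ_t : fderiv ℝ φ z et = 0 := by simp [φ, fderiv_add_coords_apply, et]
  exact ⟨mass_balance hρ hρ_tr,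
    momentum_x_balance hρ hp hρ_tr (hp_grad ex rfl),
    momentum_y_balance hρ hp hρ_tr (hp_grad ey rfl),
    energy_balance γ hρ hp hφ hρ_tr hp_tr (hp_grad ex rfl) (hp_grad ey rfl) hφ_t⟩

/-- **Exact solution of the 2D compressible Euler equations with gravity.**
For `γ > 1` and constants `u₀, v₀, p₀`, the fields
`ρ = 1 + (1/5) sin(π(x+y-t(u₀+v₀)))`, `u ≡ u₀`, `v ≡ v₀`,
`p = p₀ + t(u₀+v₀) - x - y + (1/(5π)) cos(π(x+y-t(u₀+v₀)))`,
with potential `φ = x + y` and total energy `E = p/(γ-1) + (1/2)ρ(u²+v²) + ρφ`,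
satisfy the mass, momentum and energy balance laws with gravitational source term. -/
theorem exact_solution_euler_gravity (γ u₀ v₀ p₀ : ℝ) (hγ : 1 < γ) :
    let ρ : ℝ × ℝ × ℝ → ℝ := fun z =>
      1 + (1 / 5) * Real.sin (π * (z.2.1 + z.2.2 - z.1 * (u₀ + v₀)))
    let p : ℝ × ℝ × ℝ → ℝ := fun z =>
      p₀ + z.1 * (u₀ + v₀) - z.2.1 - z.2.2
        + (1 / (5 * π)) * Real.cos (π * (z.2.1 + z.2.2 - z.1 * (u₀ + v₀)))
    let φ : ℝ × ℝ × ℝ → ℝ := fun z => z.2.1 + z.2.2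
    let Etot : ℝ × ℝ × ℝ → ℝ := fun z =>
      p z / (γ - 1) + (1 / 2) * ρ z * (u₀ ^ 2 + v₀ ^ 2) + ρ z * φ z
    let et : ℝ × ℝ × ℝ := (1, 0, 0)
    let ex : ℝ × ℝ × ℝ := (0, 1, 0)
    let ey : ℝ × ℝ × ℝ := (0, 0, 1)
    ∀ z : ℝ × ℝ × ℝ,
      -- mass conservation
      fderiv ℝ ρ z et + fderiv ℝ (fun w => ρ w * u₀) z ex
        + fderiv ℝ (fun w => ρ w * v₀) z ey = 0 ∧
      -- x-momentum balance
      fderiv ℝ (fun w => ρ w * u₀) z et + fderiv ℝ (fun w => p w + ρ w * u₀ ^ 2) z ex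
        + fderiv ℝ (fun w => ρ w * u₀ * v₀) z ey = -(ρ z) * fderiv ℝ φ z ex ∧
      -- y-momentum balance
      fderiv ℝ (fun w => ρ w * v₀) z et + fderiv ℝ (fun w => ρ w * u₀ * v₀) z ex
        + fderiv ℝ (fun w => p w + ρ w * v₀ ^ 2) z ey = -(ρ z) * fderiv ℝ φ z ey ∧
      -- energy conservation
      fderiv ℝ Etot z et + fderiv ℝ (fun w => (Etot w + p w) * u₀) z ex
        + fderiv ℝ (fun w => (Etot w + p w) * v₀) z ey = 0 :=
  exact_solution_euler_gravity_general γ u₀ v₀ p₀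
end

section
/- Let γ > 1 and let φ : Ω → ℝ (Ω ⊆ ℝ) be differentiable. Consider the isothermal stratification for the ideal gas with radiation pressure equation of state: ρ̄(χ) = exp(−φ(χ)), p̄(χ) = exp(−φ(χ)) + 1, T̄ ≡ 1. Then ∇_ext = 0 wherever φ′(χ) ≠ 0, the denominator in the adiabatic gradient formula is positive (writing E = exp(−φ(χ)), one has 32p̄² − 24p̄ρ̄T̄ − 3ρ̄²T̄² = 5E² + 40E + 32 > 0), the adiabatic temperature gradient ∇_ad = 2p̄(4p̄ − 3ρ̄T̄)/(32p̄² − 24p̄ρ̄T̄ − 3ρ̄²T̄²) = 2(E+1)(E+4)/(5E² + 40E + 32) is positive, and hence the Brunt–Väisälä frequency satisfies N(χ)² = φ′(χ)² (ρ̄/p̄) ∇_ad > 0 at every χ with φ′(χ) ≠ 0; in particular the stratification is stable with respect to convection. -/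
/-!
Writing the radiation equation of state as `p = a + b` with gas pressure `a = ρT` and radiation
pressure `b = T⁴`, the adiabatic gradient becomes `∇_ad = 2(a + b)(a + 4b) / (5a² + 40ab + 32b²)`,
a quotient of positive quantities. An isothermal stratification has `∇_ext = 0`, and
`g / H_p = g² ρ / p`, so `N² = g² (ρ / p) ∇_ad`.
-/

section RadiationEOS

variable {p ρ T : ℝ}

theorem adiabatic_numerator_eq_of_eos (hp : p = ρ * T + T ^ 4) :
    4 * p - 3 * ρ * T = ρ * T + 4 * T ^ 4 := by
  subst hp; ring

theorem adiabatic_denominator_eq_of_eos (hp : p = ρ * T + T ^ 4) :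
    32 * p ^ 2 - 24 * p * ρ * T - 3 * ρ ^ 2 * T ^ 2
      = 5 * (ρ * T) ^ 2 + 40 * (ρ * T) * T ^ 4 + 32 * (T ^ 4) ^ 2 := by
  subst hp; ring

end RadiationEOS

theorem div_div_mul_self_mul (g p ρ x : ℝ) :
    g / (p / (ρ * g)) * x = g ^ 2 * (ρ / p) * x := by
  rw [div_div_eq_mul_div]; ring

theorem radiation_isothermal_stability_general (Ω : Set ℝ)
    (φ : ℝ → ℝ) :
    ∀ χ ∈ Ω,
      (let ρ : ℝ → ℝ := fun χ => Real.exp (-φ χ)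
       let p : ℝ → ℝ := fun χ => Real.exp (-φ χ) + 1
       let T : ℝ → ℝ := fun _ => 1
       let Ev : ℝ := Real.exp (-φ χ)
       let nablaExt : ℝ := p χ * deriv T χ / (T χ * deriv p χ)
       let denom : ℝ := 32 * p χ ^ 2 - 24 * p χ * ρ χ * T χ - 3 * ρ χ ^ 2 * T χ ^ 2
       let nablaAd : ℝ := 2 * p χ * (4 * p χ - 3 * ρ χ * T χ) / denom
       let Hp : ℝ := p χ / (ρ χ * deriv φ χ)
       let Nsq : ℝ := deriv φ χ / Hp * (nablaAd - nablaExt)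
       (deriv φ χ ≠ 0 → nablaExt = 0) ∧
       denom = 5 * Ev ^ 2 + 40 * Ev + 32 ∧
       0 < denom ∧
       nablaAd = 2 * (Ev + 1) * (Ev + 4) / (5 * Ev ^ 2 + 40 * Ev + 32) ∧
       0 < nablaAd ∧
       (deriv φ χ ≠ 0 → Nsq = (deriv φ χ) ^ 2 * (ρ χ / p χ) * nablaAd ∧ 0 < Nsq) ∧
       0 ≤ Nsq) := by
  intro χ _
  dsimp only
  set E := Real.exp (-φ χ)
  have hE : 0 < E := Real.exp_pos _
  have hp : E + 1 = E * 1 + 1 ^ 4 := by ring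
  have hT : deriv (fun _ : ℝ => (1 : ℝ)) χ = 0 := deriv_const χ 1
  rw [hT, adiabatic_numerator_eq_of_eos hp, adiabatic_denominator_eq_of_eos hp,
    div_div_mul_self_mul]
  simp only [mul_zero, zero_div, sub_zero, mul_one, one_pow, true_and,
    implies_true]
  exact ⟨by positivity, by positivity, fun hg => by positivity, by positivity⟩

/-- **Convective stability of the isothermal stratification for the ideal gas with
radiation pressure.**
For `γ > 1` and a differentiable potential `φ`, the stratification
`ρ̄ = exp(-φ)`, `p̄ = exp(-φ) + 1`, `T̄ ≡ 1` has `∇_ext = 0` wherever `φ′ ≠ 0`; writing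
`E = exp(-φ(χ))`, the denominator of the adiabatic gradient formula equals
`5E² + 40E + 32 > 0`, the adiabatic gradient is
`∇_ad = 2p̄(4p̄ - 3ρ̄T̄)/(32p̄² - 24p̄ρ̄T̄ - 3ρ̄²T̄²) = 2(E+1)(E+4)/(5E² + 40E + 32) > 0`,
and the Brunt–Väisälä frequency satisfies `N² = φ′² (ρ̄/p̄) ∇_ad > 0` wherever
`φ′ ≠ 0`; in particular `N² ≥ 0` on the whole domain, i.e., the stratification is
stable with respect to convection. -/
theorem radiation_isothermal_stability (γ : ℝ) (hγ : 1 < γ) (Ω : Set ℝ)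
    (φ : ℝ → ℝ) (hφ : Differentiable ℝ φ) :
    ∀ χ ∈ Ω,
      (let ρ : ℝ → ℝ := fun χ => Real.exp (-φ χ)
       let p : ℝ → ℝ := fun χ => Real.exp (-φ χ) + 1
       let T : ℝ → ℝ := fun _ => 1
       let Ev : ℝ := Real.exp (-φ χ)
       let nablaExt : ℝ := p χ * deriv T χ / (T χ * deriv p χ)
       let denom : ℝ := 32 * p χ ^ 2 - 24 * p χ * ρ χ * T χ - 3 * ρ χ ^ 2 * T χ ^ 2
       let nablaAd : ℝ := 2 * p χ * (4 * p χ - 3 * ρ χ * T χ) / denom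
       let Hp : ℝ := p χ / (ρ χ * deriv φ χ)
       let Nsq : ℝ := deriv φ χ / Hp * (nablaAd - nablaExt)
       (deriv φ χ ≠ 0 → nablaExt = 0) ∧
       denom = 5 * Ev ^ 2 + 40 * Ev + 32 ∧
       0 < denom ∧
       nablaAd = 2 * (Ev + 1) * (Ev + 4) / (5 * Ev ^ 2 + 40 * Ev + 32) ∧
       0 < nablaAd ∧
       (deriv φ χ ≠ 0 → Nsq = (deriv φ χ) ^ 2 * (ρ χ / p χ) * nablaAd ∧ 0 < Nsq) ∧
       0 ≤ Nsq) :=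
  radiation_isothermal_stability_general Ω φ
end
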